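/- arXiv:1305.4816 — 3 statements merged into one kernel-verified Lean document; each statement's English description precedes it below -/
import Mathlib

section
/- Let S = 1 + ∑_{n≥1} Catalan(n-1) zⁿ ∈ ℚ[[z]]. For all integers p ≥ 1 and s ≥ 1, the coefficient of z^s in S^p satisfies s · [z^s] S^p = p · ∑_{ℓ=0}^{min(p-1, s-1)} C(p-1, ℓ) · C(2s-2-ℓ, s-1). -/
/-!
Write `S = 1 + M` with `M = z C(z)`, `C` the Catalan series. From `C = 1 + z C²` we get
`M² = M - z`, hence `2 M M' = M' - 1`, while `M' = ∑ C(2n, n) zⁿ`. Multiplying `M² = M - z` by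
`M' M^ℓ` gives `M' M^(ℓ+2) = M' M^(ℓ+1) - z M' M^ℓ`, which is Pascal's rule for
`[zⁿ] M' M^ℓ = C(2n - ℓ, n)` (`ℓ ≤ n`). Finally `s [z^s] S^p = [z^(s-1)] (S^p)'
= p [z^(s-1)] M' (1 + M)^(p-1)`, and expanding `(1 + M)^(p-1)` binomially gives the sum.
-/

open PowerSeries Finset

noncomputable def xCatalanSeries : ℚ⟦X⟧ := X * map (Nat.castRingHom ℚ) catalanSeries

local notation "M" => xCatalanSeries

theorem mk_catalan_pred_eq_xCatalanSeries :
    (mk fun n => if n = 0 then 0 else (catalan (n - 1) : ℚ)) = M := by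
  ext (_ | n) <;> simp [xCatalanSeries]

theorem constantCoeff_xCatalanSeries : constantCoeff M = 0 := by
  simp [xCatalanSeries]

theorem xCatalanSeries_sq : M ^ 2 = M - X := by
  have h := congrArg (map (Nat.castRingHom ℚ)) catalanSeries_sq_mul_X_add_one
  simp only [map_add, map_mul, map_pow, map_X, map_one] at h
  rw [xCatalanSeries]
  linear_combination X * h

theorem coeff_derivative_xCatalanSeries (n : ℕ) :
    coeff n (d⁄dX ℚ M) = ((2 * n).choose n : ℚ) := by
  rw [coeff_derivative, xCatalanSeries, coeff_succ_X_mul, coeff_map, catalanSeries_coeff,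
    ← Nat.centralBinom_eq_two_mul_choose, ← succ_mul_catalan_eq_centralBinom]
  push_cast
  ring

theorem two_mul_derivative_mul_xCatalanSeries :
    2 * (d⁄dX ℚ M * M) = d⁄dX ℚ M - 1 := by
  have h := congrArg (d⁄dX ℚ) xCatalanSeries_sq
  rw [derivative_pow, map_sub, derivative_X] at h
  rw [← h]
  push_cast
  ring

theorem derivative_mul_xCatalanSeries_pow_add_two (ℓ : ℕ) :
    d⁄dX ℚ M * M ^ (ℓ + 2) = d⁄dX ℚ M * M ^ (ℓ + 1) - X * (d⁄dX ℚ M * M ^ ℓ) := by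
  rw [pow_add, xCatalanSeries_sq]
  ring

theorem coeff_derivative_mul_xCatalanSeries (n : ℕ) :
    coeff n (d⁄dX ℚ M * M) = if 1 ≤ n then ((2 * n - 1).choose n : ℚ) else 0 := by
  rcases n with _ | n
  · simp [constantCoeff_xCatalanSeries]
  · have h := congrArg (coeff (n + 1)) two_mul_derivative_mul_xCatalanSeries
    have central : (2 * (n + 1)).choose (n + 1) = 2 * (2 * n + 1).choose (n + 1) := by
      rw [show 2 * (n + 1) = 2 * n + 1 + 1 by ring, Nat.choose_succ_succ, Nat.choose_symm_half]
      ring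
    rw [← map_ofNat C 2, coeff_C_mul, map_sub, coeff_derivative_xCatalanSeries, coeff_one,
      if_neg n.succ_ne_zero, sub_zero, central] at h
    rw [if_pos (by omega), show 2 * (n + 1) - 1 = 2 * n + 1 by omega]
    push_cast at h
    linarith

/- The guard `ℓ ≤ n` only matters at `n = 0`, where `2 * n - ℓ` truncates to `0`. -/
theorem coeff_derivative_mul_xCatalanSeries_pow (ℓ n : ℕ) :
    coeff n (d⁄dX ℚ M * M ^ ℓ) = if ℓ ≤ n then ((2 * n - ℓ).choose n : ℚ) else 0 := by
  induction ℓ using Nat.twoStepInduction generalizing n with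
  | zero => simp [coeff_derivative_xCatalanSeries]
  | one => simpa using coeff_derivative_mul_xCatalanSeries n
  | more ℓ ih₀ ih₁ =>
    rw [derivative_mul_xCatalanSeries_pow_add_two, map_sub, ih₁]
    rcases n with _ | n
    · simp
    rw [coeff_succ_X_mul, ih₀]
    rcases le_or_gt ℓ n with h | h
    · have pascal : (2 * (n + 1) - (ℓ + 1)).choose (n + 1) =
          (2 * n - ℓ).choose n + (2 * (n + 1) - (ℓ + 2)).choose (n + 1) := by
        rw [show 2 * (n + 1) - (ℓ + 1) = 2 * n - ℓ + 1 by omega,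
          show 2 * (n + 1) - (ℓ + 2) = 2 * n - ℓ by omega]
        exact Nat.choose_succ_succ _ _
      rw [if_pos (by omega : ℓ + 1 ≤ n + 1), if_pos h, pascal]
      push_cast
      split_ifs
      · ring
      · rw [Nat.choose_eq_zero_of_lt (show 2 * (n + 1) - (ℓ + 2) < n + 1 by omega)]
        simp
    · rw [if_neg (by omega), if_neg (by omega), if_neg (by omega), sub_zero]

theorem coeff_derivative_mul_one_add_xCatalanSeries_pow (q t : ℕ) :
    coeff t (d⁄dX ℚ M * (1 + M) ^ q) =
      ∑ ℓ ∈ range (min q t + 1), (q.choose ℓ : ℚ) * (2 * t - ℓ).choose t := by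
  have hfilter : {ℓ ∈ range (q + 1) | ℓ ≤ t} = range (min q t + 1) := by
    ext
    simp only [mem_filter, mem_range]
    omega
  rw [add_comm, add_pow, mul_sum, map_sum, ← hfilter, sum_filter]
  refine sum_congr rfl fun ℓ _ => ?_
  rw [one_pow, mul_one, ← map_natCast C, mul_comm (M ^ ℓ), mul_left_comm, coeff_C_mul,
    coeff_derivative_mul_xCatalanSeries_pow, mul_ite, mul_zero]

theorem coeff_S_pow_general (S : PowerSeries ℚ)
    (hS : S = 1 + PowerSeries.mk fun n => if n = 0 then 0 else (catalan (n - 1) : ℚ))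
    (p s : ℕ) (hs : 1 ≤ s) :
    (s : ℚ) * PowerSeries.coeff s (S ^ p) =
      (p : ℚ) * ∑ ℓ ∈ Finset.range (min (p - 1) (s - 1) + 1),
        (Nat.choose (p - 1) ℓ : ℚ) * (Nat.choose (2 * s - 2 - ℓ) (s - 1) : ℚ) := by
  obtain ⟨t, rfl⟩ : ∃ t, s = t + 1 := ⟨s - 1, by omega⟩
  rw [mk_catalan_pred_eq_xCatalanSeries] at hS
  subst hS
  have hD : d⁄dX ℚ ((1 + M) ^ p) = C (p : ℚ) * (d⁄dX ℚ M * (1 + M) ^ (p - 1)) := by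
    rw [derivative_pow, map_add, derivative_one, zero_add, map_natCast]
    ring
  calc ((t + 1 : ℕ) : ℚ) * coeff (t + 1) ((1 + M) ^ p)
      = coeff t (d⁄dX ℚ ((1 + M) ^ p)) := by
        rw [coeff_derivative]
        push_cast
        ring
    _ = p * coeff t (d⁄dX ℚ M * (1 + M) ^ (p - 1)) := by rw [hD, coeff_C_mul]
    _ = _ := by
        rw [coeff_derivative_mul_one_add_xCatalanSeries_pow, Nat.add_sub_cancel,
          show 2 * (t + 1) - 2 = 2 * t by omega]

theorem coeff_S_pow (S : PowerSeries ℚ)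
    (hS : S = 1 + PowerSeries.mk fun n => if n = 0 then 0 else (catalan (n - 1) : ℚ))
    (p s : ℕ) (hp : 1 ≤ p) (hs : 1 ≤ s) :
    (s : ℚ) * PowerSeries.coeff s (S ^ p) =
      (p : ℚ) * ∑ ℓ ∈ Finset.range (min (p - 1) (s - 1) + 1),
        (Nat.choose (p - 1) ℓ : ℚ) * (Nat.choose (2 * s - 2 - ℓ) (s - 1) : ℚ) :=
  coeff_S_pow_general S hS p s hs
end

section
/- Let R be a formal power series over a commutative ℚ-algebra, a, c positive integers, and n ≥ 0 an integer. Then (a+c) · ∑_{p=1}^{n+1} C(n, p-1) · D^p(R^a) · D^{n+1-p}(R^c) = a · D^{n+1}(R^{a+c}), where D^k denotes the k-th iterated formal derivative. -/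
/-!
The sum is the Leibniz expansion of `Dⁿ (D (R ^ a) * R ^ c)`, and
`(a + c) • (D (R ^ a) * R ^ c) = a • D (R ^ (a + c))` because both sides equal
`a (a + c) R ^ (a + c - 1) D R`; apply `Dⁿ`, which commutes with `ℕ`-scalars.
-/

open Finset

namespace Derivation

variable {R A : Type*} [CommSemiring R] [CommSemiring A] [Algebra R A] (D : Derivation R A A)

theorem iterate_map_mul (f g : A) (n : ℕ) :
    (⇑D)^[n] (f * g) = ∑ i ∈ range (n + 1), n.choose i • ((⇑D)^[i] f * (⇑D)^[n - i] g) := by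
  induction n with
  | zero => simp
  | succ n ih =>
    rw [Function.iterate_succ_apply', ih, sum_choose_succ_nsmul (fun i j ↦ (⇑D)^[i] f * (⇑D)^[j] g),
      map_sum, ← sum_add_distrib]
    refine sum_congr rfl fun i hi ↦ ?_
    have hsub : n + 1 - i = n - i + 1 := by grind
    rw [hsub, Function.iterate_succ_apply', Function.iterate_succ_apply', map_nsmul, leibniz,
      smul_eq_mul, smul_eq_mul]
    ring

theorem add_nsmul_map_pow_mul_pow (f : A) (a c : ℕ) :
    (a + c) • (D (f ^ a) * f ^ c) = a • D (f ^ (a + c)) := by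
  rcases a with _ | a
  · simp
  · simp only [leibniz_pow, smul_eq_mul, nsmul_eq_mul, Nat.add_sub_cancel, Nat.cast_add,
      Nat.cast_succ, Nat.add_right_comm a 1 c]
    ring

end Derivation

theorem Finset.sum_Icc_one_eq_sum_range {M : Type*} [AddCommMonoid M] (f : ℕ → M) (n : ℕ) :
    ∑ p ∈ Icc 1 (n + 1), f p = ∑ i ∈ range (n + 1), f (i + 1) := by
  rw [range_eq_Ico, sum_Ico_add', zero_add, Ico_add_one_right_eq_Icc]

theorem iterated_deriv_pow_identity_general (A : Type*) [CommRing A]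
    (R : PowerSeries A) (a c n : ℕ) :
    (a + c) • ∑ p ∈ Finset.Icc 1 (n + 1),
        (Nat.choose n (p - 1)) •
          ((⇑(PowerSeries.derivative A))^[p] (R ^ a) *
            (⇑(PowerSeries.derivative A))^[n + 1 - p] (R ^ c)) =
      a • (⇑(PowerSeries.derivative A))^[n + 1] (R ^ (a + c)) := by
  set D := PowerSeries.derivative A
  calc (a + c) • ∑ p ∈ Icc 1 (n + 1),
          n.choose (p - 1) • ((⇑D)^[p] (R ^ a) * (⇑D)^[n + 1 - p] (R ^ c))
    _ = (a + c) • (⇑D)^[n] (D (R ^ a) * R ^ c) := by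
      simp only [sum_Icc_one_eq_sum_range, D.iterate_map_mul, Nat.add_sub_cancel,
        Nat.add_sub_add_right, Function.iterate_succ_apply]
    _ = (⇑D)^[n] (a • D (R ^ (a + c))) := by
      rw [← iterate_map_nsmul, D.add_nsmul_map_pow_mul_pow]
    _ = a • (⇑D)^[n + 1] (R ^ (a + c)) := by
      rw [iterate_map_nsmul, Function.iterate_succ_apply]

theorem iterated_deriv_pow_identity (A : Type*) [CommRing A] [Algebra ℚ A]
    (R : PowerSeries A) (a c n : ℕ) (ha : 1 ≤ a) (hc : 1 ≤ c) :
    (a + c) • ∑ p ∈ Finset.Icc 1 (n + 1),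
        (Nat.choose n (p - 1)) •
          ((⇑(PowerSeries.derivative A))^[p] (R ^ a) *
            (⇑(PowerSeries.derivative A))^[n + 1 - p] (R ^ c)) =
      a • (⇑(PowerSeries.derivative A))^[n + 1] (R ^ (a + c)) :=
  iterated_deriv_pow_identity_general A R a c n
end

section
/- Define a(q) = (6/q) · ∑_{ℓ=0}^{min(5, q-1)} C(5, ℓ) · C(2q-2-ℓ, q-1) for integers q ≥ 1. Then q divides 6·∑_{ℓ=0}^{min(5,q-1)} C(5,ℓ)·C(2q-2-ℓ, q-1), and a(1) = 6, a(2) = 21, a(3) = 62, a(4) = 180, a(5) = 540. -/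
def hexSquareSum (q : ℕ) : ℕ :=
  ∑ ℓ ∈ Finset.range (min 5 (q - 1) + 1),
    Nat.choose 5 ℓ * Nat.choose (2 * q - 2 - ℓ) (q - 1)

def hexSquareCount (q : ℕ) : ℕ := 6 * hexSquareSum q / q

/-! Writing `q = k + 1` and `n = 2k - ℓ`, the ballot-type identity
`(ℓ + 1) C(n, k) = (k + 1) (C(n, k) - C(n, k + 1))` shows that `k + 1` divides
`(ℓ + 1) C(n, k)`, and `6 C(5, ℓ) = C(6, ℓ + 1) (ℓ + 1)` turns every summand of
`6 · hexSquareSum q` into a multiple of `(ℓ + 1) C(n, k)`. -/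

namespace Nat

theorem mul_choose_add_succ_mul_choose_succ {n k : ℕ} (h : n ≤ 2 * k + 1) :
    (2 * k + 1 - n) * n.choose k + (k + 1) * n.choose (k + 1) = (k + 1) * n.choose k := by
  rcases le_or_gt k n with hkn | hnk
  · rw [mul_comm (k + 1), choose_succ_right_eq, mul_comm (n.choose k), ← add_mul]
    congr 1
    omega
  · simp [choose_eq_zero_of_lt hnk, choose_eq_zero_of_lt (hnk.trans k.lt_succ_self)]

theorem succ_dvd_mul_choose {n k : ℕ} (h : n ≤ 2 * k + 1) :
    k + 1 ∣ (2 * k + 1 - n) * n.choose k :=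
  (Nat.dvd_add_left (dvd_mul_right _ _)).mp
    (mul_choose_add_succ_mul_choose_succ h ▸ dvd_mul_right _ _)

theorem succ_dvd_succ_mul_choose_mul_choose {m k ℓ : ℕ} (h : ℓ ≤ k) :
    k + 1 ∣ (m + 1) * (m.choose ℓ * (2 * k - ℓ).choose k) := by
  have hballot : k + 1 ∣ (ℓ + 1) * (2 * k - ℓ).choose k := by
    simpa [show 2 * k + 1 - (2 * k - ℓ) = ℓ + 1 by omega] using
      succ_dvd_mul_choose (n := 2 * k - ℓ) (k := k) (by omega)
  rw [← mul_assoc, add_one_mul_choose_eq, mul_assoc]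
  exact hballot.mul_left _

end Nat

theorem dvd_six_mul_hexSquareSum {q : ℕ} (hq : 1 ≤ q) : q ∣ 6 * hexSquareSum q := by
  obtain ⟨k, rfl⟩ := Nat.exists_eq_add_of_le' hq
  rw [hexSquareSum, Finset.mul_sum]
  refine Finset.dvd_sum fun ℓ hℓ => ?_
  have hℓk : ℓ ≤ k := by rw [Finset.mem_range] at hℓ; omega
  simpa [show 2 * (k + 1) - 2 - ℓ = 2 * k - ℓ by omega] using
    Nat.succ_dvd_succ_mul_choose_mul_choose (m := 5) hℓk

theorem hexSquare_values :
    (∀ q : ℕ, 1 ≤ q → q ∣ 6 * hexSquareSum q) ∧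
    hexSquareCount 1 = 6 ∧ hexSquareCount 2 = 21 ∧ hexSquareCount 3 = 62 ∧
    hexSquareCount 4 = 180 ∧ hexSquareCount 5 = 540 :=
  ⟨fun _ => dvd_six_mul_hexSquareSum, by decide⟩
end
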